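/- Let K be a field and M ∈ Mat_m(K[x_1,...,x_n]) be strongly nilpotent with strong nilpotency index r. Then there exists T ∈ GL_m(K) and positive integers s_1,...,s_r with s_1+···+s_r ≤ m such that T⁻¹MT is block lower triangular with zero square diagonal blocks of sizes s_1,...,s_r. -/

import Mathlib

open MvPolynomial

/-- Substitute the `i`-th fresh tuple of indeterminates for `x` in every entry of `M`. -/
noncomputable def substN {K : Type} [CommRing K] {n m : ℕ}
    (M : Matrix (Fin m) (Fin m) (MvPolynomial (Fin n) K)) (i : ℕ) :
    Matrix (Fin m) (Fin m) (MvPolynomial (ℕ × Fin n) K) :=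
  M.map (rename fun k => (i, k))

/-- The product `M|_{x=y⁽ʳ⁾} ⬝ ⋯ ⬝ M|_{x=y⁽¹⁾}` (fresh tuples indexed `r-1, …, 0`). -/
noncomputable def prodSubst {K : Type} [CommRing K] {n m : ℕ}
    (M : Matrix (Fin m) (Fin m) (MvPolynomial (Fin n) K)) (r : ℕ) :
    Matrix (Fin m) (Fin m) (MvPolynomial (ℕ × Fin n) K) :=
  ((List.range r).reverse.map (substN M)).prod

/-!
Write `M = ∑ₑ xᵉ Mₑ` with constant coefficient matrices `Mₑ` and let `V₀ = Kᵐ`,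
`Vₖ₊₁ = ∑ₑ Mₑ Vₖ`. Because the tuples `y⁽ⁱ⁾` are disjoint, the coefficients of
`M|_{x=y⁽ᵏ⁾} ⋯ M|_{x=y⁽¹⁾}` are exactly the products `M_{e_k} ⋯ M_{e_1}`, so `Vₖ` is spanned by
the columns of these coefficients. Strong nilpotency of index `r` therefore says that
`Vᵣ = 0` while `Vₖ ≠ 0` for `k < r`, which forces the flag `V₀ ⊋ V₁ ⊋ ⋯ ⊋ Vᵣ = 0` to be strict.
In a basis adapted to this flag, with the `k`-th block spanning a complement of `Vₖ₊₁` in `Vₖ`,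
every `Mₑ` maps block `k` into `Vₖ₊₁`, i.e. into the blocks after `k`: this is the required
block lower triangular form with zero diagonal blocks.
-/

open Finset Module Submodule Set
open scoped Matrix

namespace MvPolynomial

variable {σ R : Type*} [CommSemiring R]

lemma support_subset_of_mem_supported {s : Set σ} {p : MvPolynomial σ R} (hp : p ∈ supported R s)
    {d : σ →₀ ℕ} (hd : coeff d p ≠ 0) : ↑d.support ⊆ s :=
  (Finset.coe_subset.mpr (support_subset_vars_of_mem_support (mem_support_iff.mpr hd))).trans
    (mem_supported.mp hp)

lemma coeff_add_mul_of_mem_supported {s : Set σ} {p q : MvPolynomial σ R}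
    (hp : p ∈ supported R s) (hq : q ∈ supported R sᶜ) {a b : σ →₀ ℕ}
    (ha : ↑a.support ⊆ s) (hb : ↑b.support ⊆ sᶜ) :
    coeff (a + b) (p * q) = coeff a p * coeff b q := by
  classical
  rw [coeff_mul]
  refine Finset.sum_eq_single (a, b) (fun x hx hne => ?_) (by simp)
  by_contra hx0
  have hxp := support_subset_of_mem_supported hp (left_ne_zero_of_mul hx0)
  have hxq := support_subset_of_mem_supported hq (right_ne_zero_of_mul hx0)
  have vanish {c : σ →₀ ℕ} {t : Set σ} (hc : ↑c.support ⊆ t) {i : σ} (hi : i ∉ t) : c i = 0 :=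
    Finsupp.notMem_support_iff.mp fun h => hi (hc h)
  have hsum := Finset.HasAntidiagonal.mem_antidiagonal.mp hx
  refine hne (Prod.ext (Finsupp.ext fun i => ?_) (Finsupp.ext fun i => ?_)) <;> dsimp only <;>
  · have hsum_i : x.1 i + x.2 i = a i + b i := by simpa using DFunLike.congr_fun hsum i
    by_cases hi : i ∈ s
    · have := vanish hxq (Set.notMem_compl_iff.mpr hi)
      have := vanish hb (Set.notMem_compl_iff.mpr hi)
      omega
    · have := vanish hxp hi
      have := vanish ha hi
      omega

end MvPolynomial

namespace Matrix

variable {ι σ R : Type*} [CommSemiring R]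

lemma support_subset_of_map_coeff_ne_zero {s : Set σ} {A : Matrix ι ι (MvPolynomial σ R)}
    (hA : ∀ i j, A i j ∈ supported R s) {d : σ →₀ ℕ} (hd : A.map (coeff d) ≠ 0) :
    ↑d.support ⊆ s := by
  obtain ⟨i, j, hij⟩ : ∃ i j, coeff d (A i j) ≠ 0 := by
    by_contra! h
    exact hd (Matrix.ext h)
  exact support_subset_of_mem_supported (hA i j) hij

variable [Fintype ι]

lemma map_coeff_mul [DecidableEq σ] (A B : Matrix ι ι (MvPolynomial σ R)) (d : σ →₀ ℕ) :
    (A * B).map (coeff d) = ∑ x ∈ antidiagonal d, A.map (coeff x.1) * B.map (coeff x.2) := by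
  ext i j
  simp only [map_apply, mul_apply, coeff_sum, coeff_mul, Matrix.sum_apply]
  exact Finset.sum_comm

lemma map_coeff_add_mul_of_mem_supported {s : Set σ} {A B : Matrix ι ι (MvPolynomial σ R)}
    (hA : ∀ i j, A i j ∈ supported R s) (hB : ∀ i j, B i j ∈ supported R sᶜ) {a b : σ →₀ ℕ}
    (ha : ↑a.support ⊆ s) (hb : ↑b.support ⊆ sᶜ) :
    (A * B).map (coeff (a + b)) = A.map (coeff a) * B.map (coeff b) := by
  ext i j
  simp only [map_apply, mul_apply, coeff_sum,
    coeff_add_mul_of_mem_supported (hA _ _) (hB _ _) ha hb]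

lemma map_coeff_algebraMap_mul_mul (A B : Matrix ι ι R) (M : Matrix ι ι (MvPolynomial σ R))
    (d : σ →₀ ℕ) :
    (A.map (algebraMap R _) * M * B.map (algebraMap R _)).map (coeff d) =
      A * M.map (coeff d) * B := by
  ext i j
  simp only [map_apply, mul_apply, algebraMap_eq, Finset.sum_mul, coeff_sum, mul_comm _ (C _),
    coeff_C_mul, Finset.mul_sum]
  exact Finset.sum_congr rfl fun _ _ => Finset.sum_congr rfl fun _ _ => mul_comm _ _

end Matrix

section CoeffFlag

variable {ι σ R : Type*} [Fintype ι] [CommSemiring R]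

def coeffSpan (A : Matrix ι ι (MvPolynomial σ R)) : Submodule R (ι → R) :=
  ⨆ d, LinearMap.range (A.map (coeff d)).mulVecLin

lemma coeffSpan_eq_bot_iff {A : Matrix ι ι (MvPolynomial σ R)} : coeffSpan A = ⊥ ↔ A = 0 := by
  classical
  simp only [coeffSpan, iSup_eq_bot, LinearMap.range_eq_bot, ← Matrix.toLin'_apply',
    LinearEquiv.map_eq_zero_iff]
  constructor
  · intro h
    ext i j d
    simpa using congrFun₂ (h d) i j
  · rintro rfl d
    ext
    simp

def coeffImage (M : Matrix ι ι (MvPolynomial σ R)) (W : Submodule R (ι → R)) :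
    Submodule R (ι → R) :=
  ⨆ e, W.map (M.map (coeff e)).mulVecLin

def imageFlag (M : Matrix ι ι (MvPolynomial σ R)) (k : ℕ) : Submodule R (ι → R) :=
  (coeffImage M)^[k] ⊤

variable (M : Matrix ι ι (MvPolynomial σ R))

lemma coeffImage_mono : Monotone (coeffImage M) :=
  fun _ _ h => iSup_mono fun _ => Submodule.map_mono h

lemma imageFlag_zero : imageFlag M 0 = ⊤ := rfl

lemma imageFlag_succ (k : ℕ) : imageFlag M (k + 1) = coeffImage M (imageFlag M k) :=
  Function.iterate_succ_apply' _ _ _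

lemma imageFlag_antitone : Antitone (imageFlag M) := by
  refine antitone_nat_of_succ_le fun k => ?_
  induction k with
  | zero => exact le_top
  | succ k ih => simpa only [imageFlag_succ] using coeffImage_mono M ih

lemma map_imageFlag_le (e : σ →₀ ℕ) (k : ℕ) :
    (imageFlag M k).map (M.map (coeff e)).mulVecLin ≤ imageFlag M (k + 1) := by
  rw [imageFlag_succ]
  exact le_iSup (fun e => (imageFlag M k).map (M.map (coeff e)).mulVecLin) e

lemma imageFlag_add_of_succ_eq {k : ℕ} (h : imageFlag M (k + 1) = imageFlag M k) (j : ℕ) :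
    imageFlag M (j + k) = imageFlag M k := by
  rw [imageFlag, Function.iterate_add_apply]
  exact Function.iterate_fixed ((imageFlag_succ M k).symm.trans h) j

end CoeffFlag

section ProdSubst

variable {K : Type} [CommRing K] {n m : ℕ} (M : Matrix (Fin m) (Fin m) (MvPolynomial (Fin n) K))

lemma prodSubst_zero : prodSubst M 0 = 1 := by simp [prodSubst]

lemma prodSubst_succ (k : ℕ) : prodSubst M (k + 1) = substN M k * prodSubst M k := by
  simp [prodSubst, List.range_succ]

lemma substN_mem_supported (k : ℕ) (i j : Fin m) :
    substN M k i j ∈ supported K {p | p.1 = k} := by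
  classical
  rw [mem_supported]
  intro p hp
  obtain ⟨x, -, rfl⟩ := Finset.mem_image.mp (vars_rename _ _ hp)
  rfl

lemma prodSubst_mem_supported (k : ℕ) (i j : Fin m) :
    prodSubst M k i j ∈ supported K {p | p.1 < k} := by
  induction k generalizing i j with
  | zero =>
    rw [prodSubst_zero, Matrix.one_apply]
    split_ifs
    · exact Subalgebra.one_mem _
    · exact Subalgebra.zero_mem _
  | succ k ih =>
    rw [prodSubst_succ, Matrix.mul_apply]
    refine Subalgebra.sum_mem _ fun l _ => Subalgebra.mul_mem _ ?_ ?_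
    · refine supported_mono ?_ (substN_mem_supported M k i l)
      exact fun p (hp : p.1 = k) => show p.1 < k + 1 by omega
    · refine supported_mono ?_ (ih l j)
      exact fun p (hp : p.1 < k) => show p.1 < k + 1 by omega

lemma map_coeff_substN_mapDomain (k : ℕ) (e : Fin n →₀ ℕ) :
    (substN M k).map (coeff (Finsupp.mapDomain (k, ·) e)) = M.map (coeff e) := by
  ext i j
  exact coeff_rename_mapDomain _ (Prod.mk_right_injective k) _ _

lemma map_coeff_substN_eq_zero_or (k : ℕ) (d : ℕ × Fin n →₀ ℕ) :
    (substN M k).map (coeff d) = 0 ∨ ∃ e, (substN M k).map (coeff d) = M.map (coeff e) := by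
  by_cases hd : ∃ e, Finsupp.mapDomain (k, ·) e = d
  · obtain ⟨e, rfl⟩ := hd
    exact Or.inr ⟨e, map_coeff_substN_mapDomain M k e⟩
  · left
    ext i j
    exact coeff_rename_eq_zero _ _ _ fun e he => absurd ⟨e, he⟩ hd

theorem imageFlag_eq_coeffSpan_prodSubst (k : ℕ) :
    imageFlag M k = coeffSpan (prodSubst M k) := by
  classical
  induction k with
  | zero =>
    rw [imageFlag_zero, prodSubst_zero, eq_comm, eq_top_iff]
    refine le_iSup_of_le 0 ?_
    rw [Matrix.map_one _ (coeff_zero _) coeff_zero_one, Matrix.mulVecLin_one, LinearMap.range_id]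
  | succ k ih =>
    have hP := prodSubst_mem_supported M k
    have hlt : {p : ℕ × Fin n | p.1 < k} ⊆ {p | p.1 = k}ᶜ := fun _ hp => Nat.ne_of_lt hp
    rw [imageFlag_succ, ih]
    apply le_antisymm
    · refine iSup_le fun e => ?_
      rw [coeffSpan, Submodule.map_iSup]
      refine iSup_le fun d => ?_
      rw [← LinearMap.range_comp, ← Matrix.mulVecLin_mul]
      by_cases hd : (prodSubst M k).map (coeff d) = 0
      · simp [hd]
      have hdk : ↑d.support ⊆ {p : ℕ × Fin n | p.1 = k}ᶜ :=
        (Matrix.support_subset_of_map_coeff_ne_zero hP hd).trans hlt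
      have hek : ↑(Finsupp.mapDomain (k, ·) e).support ⊆ {p : ℕ × Fin n | p.1 = k} := by
        intro p hp
        obtain ⟨x, -, rfl⟩ := Finset.mem_image.mp (Finsupp.mapDomain_support hp)
        rfl
      have hPk : ∀ i j, prodSubst M k i j ∈ supported K {p : ℕ × Fin n | p.1 = k}ᶜ :=
        fun i j => supported_mono hlt (hP i j)
      rw [← map_coeff_substN_mapDomain M k e, ← Matrix.map_coeff_add_mul_of_mem_supported
        (substN_mem_supported M k) hPk hek hdk, ← prodSubst_succ]
      exact le_iSup (fun d => LinearMap.range ((prodSubst M (k + 1)).map (coeff d)).mulVecLin) _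
    · refine iSup_le fun d => ?_
      rintro _ ⟨v, rfl⟩
      rw [prodSubst_succ, Matrix.map_coeff_mul, Matrix.mulVecLin_apply, Matrix.sum_mulVec]
      refine Submodule.sum_mem _ fun x _ => ?_
      rcases map_coeff_substN_eq_zero_or M k x.1 with h | ⟨e, h⟩
      · simp [h]
      · rw [h, ← Matrix.mulVec_mulVec]
        exact Submodule.mem_iSup_of_mem e (Submodule.mem_map_of_mem
          (Submodule.mem_iSup_of_mem x.2 (LinearMap.mem_range_self _ v)))

end ProdSubst

section Flag

variable {K V : Type*} [Field K] [AddCommGroup V] [Module K V] {F : ℕ → Submodule K V}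

theorem exists_linearIndepOn_forall_le_span_inter (hF : Antitone F) {r : ℕ} (hr : F r = ⊥) :
    ∃ s : Set V, LinearIndepOn K id s ∧ ∀ j, F j ≤ span K (s ∩ F j) := by
  suffices h : ∀ k ≤ r, ∃ s ⊆ (F k : Set V), LinearIndepOn K id s ∧
      ∀ j ≥ k, F j ≤ span K (s ∩ F j) by
    obtain ⟨s, -, hs, hspan⟩ := h 0 r.zero_le
    exact ⟨s, hs, fun j => hspan j j.zero_le⟩
  intro k hk
  induction hk using Nat.decreasingInduction with
  | self =>
    refine ⟨∅, empty_subset _, linearIndepOn_empty K id, fun j hj => ?_⟩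
    exact (hF hj).trans (hr.trans_le bot_le)
  | of_succ k _ ih =>
    obtain ⟨s, hsF, hs, hspan⟩ := ih
    obtain ⟨b, hbF, hsb, hFb, hb⟩ :=
      exists_linearIndepOn_id_extension hs (hsF.trans (hF k.le_succ))
    refine ⟨b, hbF, hb, fun j hj => ?_⟩
    rcases hj.eq_or_lt with rfl | hj
    · rwa [inter_eq_left.mpr hbF]
    · exact (hspan j hj).trans (span_mono (inter_subset_inter_left _ hsb))

variable (F) in
open Classical in
noncomputable def flagDepth (r : ℕ) (v : V) : ℕ := Nat.findGreatest (v ∈ F ·) r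

variable {r : ℕ}

lemma mem_flagDepth (h0 : F 0 = ⊤) (v : V) : v ∈ F (flagDepth F r v) := by
  classical
  exact Nat.findGreatest_spec (P := (v ∈ F ·)) r.zero_le (h0 ▸ mem_top)

lemma flagDepth_lt (h0 : F 0 = ⊤) (hr : F r = ⊥) {v : V} (hv : v ≠ 0) : flagDepth F r v < r := by
  classical
  refine (Nat.findGreatest_le r).lt_of_ne fun h => hv ?_
  have hv' := mem_flagDepth (r := r) h0 v
  rwa [flagDepth, h, hr, mem_bot] at hv'

lemma le_flagDepth (hF : Antitone F) (hr : F r = ⊥) {v : V} (hv : v ≠ 0) {j : ℕ}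
    (hvj : v ∈ F j) : j ≤ flagDepth F r v := by
  classical
  refine Nat.le_findGreatest (le_of_not_gt fun hj => hv ?_) hvj
  simpa [hr] using hF hj.le hvj

namespace Module.Basis

variable {ι : Type*}

def IsAdapted (B : Basis ι K V) (F : ℕ → Submodule K V) : Prop :=
  ∀ j, F j ≤ span K (range B ∩ F j)

variable {B : Basis ι K V}

lemma IsAdapted.repr_eq_zero (hB : B.IsAdapted F) {v : V} {j : ℕ} (hv : v ∈ F j) {i : ι}
    (hi : B i ∉ F j) : B.repr v i = 0 := by
  have hv' : v ∈ span K (B '' (B ⁻¹' F j)) := by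
    rw [image_preimage_eq_range_inter]
    exact hB j hv
  exact Finsupp.notMem_support_iff.mp fun h => hi (B.repr_support_subset_of_mem_span _ hv' h)

lemma IsAdapted.exists_flagDepth_eq (hB : B.IsAdapted F) (hF : Antitone F) (h0 : F 0 = ⊤)
    (hr : F r = ⊥) {k : ℕ} (hk : F (k + 1) ≠ F k) : ∃ i, flagDepth F r (B i) = k := by
  obtain ⟨v, hvk, hvk1⟩ := SetLike.exists_of_lt ((hF k.le_succ).lt_of_ne hk)
  by_contra! h
  refine hvk1 (span_le.mpr ?_ (hB k hvk))
  rintro _ ⟨⟨i, rfl⟩, hik⟩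
  have hki := le_flagDepth hF hr (B.ne_zero i) hik
  exact hF (show k + 1 ≤ flagDepth F r (B i) by have := h i; omega) (mem_flagDepth h0 (B i))

end Module.Basis

theorem exists_basis_isAdapted_monotone [FiniteDimensional K V] (hF : Antitone F)
    (h0 : F 0 = ⊤) (hr : F r = ⊥) {m : ℕ} (hm : finrank K V = m) :
    ∃ B : Basis (Fin m) K V, B.IsAdapted F ∧ Monotone (flagDepth F r ∘ B) := by
  obtain ⟨s, hs, hsF⟩ := exists_linearIndepOn_forall_le_span_inter hF hr
  have hrange : range (fun x : s => id (x : V)) = s := by simp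
  let B₀ : Basis s K V := .mk hs.linearIndependent (by simpa [hrange, h0] using hsF 0)
  let B₁ := B₀.reindex (B₀.indexEquiv (finBasisOfFinrankEq K V hm))
  refine ⟨B₁.reindex (Tuple.sort (flagDepth F r ∘ B₁)).symm, fun j => ?_, ?_⟩
  · rw [Basis.range_reindex, Basis.range_reindex, Basis.coe_mk, hrange]
    exact hsF j
  · simpa [Function.comp_def] using Tuple.monotone_sort (flagDepth F r ∘ B₁)

theorem exists_basis_blockTriangular [FiniteDimensional K V] (hF : Antitone F)
    (h0 : F 0 = ⊤) (hr : F r = ⊥) (hstrict : ∀ k < r, F (k + 1) ≠ F k) {m : ℕ}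
    (hm : finrank K V = m) :
    ∃ (B : Basis (Fin m) K V) (blk : Fin m → Fin r), Monotone blk ∧ Function.Surjective blk ∧
      ∀ f : V →ₗ[K] V, (∀ k, (F k).map f ≤ F (k + 1)) →
        ∀ i j, blk i ≤ blk j → B.repr (f (B j)) i = 0 := by
  obtain ⟨B, hB, hmono⟩ := exists_basis_isAdapted_monotone hF h0 hr hm
  refine ⟨B, fun i => ⟨flagDepth F r (B i), flagDepth_lt h0 hr (B.ne_zero i)⟩,
    fun i j hij => hmono hij, fun k => ?_, fun f hf i j hij => ?_⟩
  · obtain ⟨i, hi⟩ := hB.exists_flagDepth_eq hF h0 hr (hstrict k k.isLt)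
    exact ⟨i, Fin.ext hi⟩
  · refine hB.repr_eq_zero (hf _ (mem_map_of_mem (mem_flagDepth (r := r) h0 (B j)))) fun hi => ?_
    have := le_flagDepth hF hr (B.ne_zero i) hi
    rw [Fin.mk_le_mk] at hij
    omega

end Flag

lemma Module.Basis.toMatrix_inv_mul_mul_toMatrix {K ι : Type*} [Field K] [Fintype ι]
    [DecidableEq ι] (B : Basis ι K (ι → K)) (A : Matrix ι ι K) (i j : ι) :
    (((Pi.basisFun K ι).toMatrix B)⁻¹ * A * (Pi.basisFun K ι).toMatrix B) i j =
      B.repr (A *ᵥ B j) i := by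
  have hconj := basis_toMatrix_mul_linearMap_toMatrix_mul_basis_toMatrix B (Pi.basisFun K ι) B
    (Pi.basisFun K ι) (Matrix.toLin' A)
  rw [LinearMap.toMatrix_eq_toMatrix', LinearMap.toMatrix'_toLin'] at hconj
  rw [Matrix.inv_eq_left_inv (B.toMatrix_mul_toMatrix_flip _), hconj, LinearMap.toMatrix_apply,
    Matrix.toLin'_apply]

theorem stmt2 {K : Type} [Field K] {m n : ℕ}
    (M : Matrix (Fin m) (Fin m) (MvPolynomial (Fin n) K)) (r : ℕ)
    (h0 : prodSubst M r = 0)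
    (hmin : ∀ r' < r, prodSubst M r' ≠ 0) :
    ∃ T : Matrix (Fin m) (Fin m) K, IsUnit T.det ∧
      ∃ blk : Fin m → Fin r, Monotone blk ∧
        (∀ k : Fin r, 1 ≤ (Finset.univ.filter fun i => blk i = k).card) ∧
        ∀ i j : Fin m, blk i ≤ blk j →
          ((T⁻¹.map (algebraMap K (MvPolynomial (Fin n) K))) * M *
            (T.map (algebraMap K (MvPolynomial (Fin n) K)))) i j = 0 := by
  have hFr : imageFlag M r = ⊥ := by
    rw [imageFlag_eq_coeffSpan_prodSubst, coeffSpan_eq_bot_iff, h0]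
  have hstrict : ∀ k < r, imageFlag M (k + 1) ≠ imageFlag M k := by
    intro k hk heq
    have hstable := imageFlag_add_of_succ_eq M heq (r - k)
    rw [Nat.sub_add_cancel hk.le, hFr, eq_comm, imageFlag_eq_coeffSpan_prodSubst,
      coeffSpan_eq_bot_iff] at hstable
    exact hmin k hk hstable
  obtain ⟨B, blk, hmono, hsurj, htri⟩ := exists_basis_blockTriangular (imageFlag_antitone M)
    (imageFlag_zero M) hFr hstrict (Module.finrank_fin_fun K)
  refine ⟨(Pi.basisFun K (Fin m)).toMatrix B,
    Matrix.isUnit_det_of_left_inverse (B.toMatrix_mul_toMatrix_flip _), blk, hmono,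
    fun k => ?_, fun i j hij => ?_⟩
  · obtain ⟨i, rfl⟩ := hsurj k
    exact Finset.card_pos.mpr ⟨i, by simp⟩
  · ext e
    rw [coeff_zero, ← Matrix.map_apply (f := coeff e), Matrix.map_coeff_algebraMap_mul_mul,
      B.toMatrix_inv_mul_mul_toMatrix]
    exact htri _ (map_imageFlag_le M e) i j hij
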